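/- A permutation test p-value is valid: if T, T₁,…,T_B are exchangeable real-valued random variables, then for any α ∈ (0,1), P( (1 + #{i : Tᵢ ≥ T})/(B+1) ≤ α ) ≤ α. -/

import Mathlib

/-!
Write `p̂ = r / (B + 1)`, where `r` is the number of the `B + 1` values `T, T₁, …, T_B` that are
at least `T`. Then `p̂ ≤ α` means `r ≤ k := ⌊(B + 1) α⌋₊`. By exchangeability, each of the `B + 1`
coordinates has the same probability of having at most `k` coordinates above it, and pointwise at
most `k` coordinates can have this property. Summing over the coordinates gives
`(B + 1) P(p̂ ≤ α) ≤ k ≤ (B + 1) α`.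
-/

open MeasureTheory Finset
open scoped ENNReal

section UpperRank

variable {ι α : Type*} [Fintype ι] [LinearOrder α]

def upperRank (x : ι → α) (j : ι) : ℕ :=
  #{i | x j ≤ x i}

lemma upperRank_pos (x : ι → α) (j : ι) : 0 < upperRank x j :=
  card_pos.mpr ⟨j, mem_filter.mpr ⟨mem_univ j, le_rfl⟩⟩

lemma upperRank_comp_perm (x : ι → α) (σ : Equiv.Perm ι) (j : ι) :
    upperRank (x ∘ σ) j = upperRank x (σ j) := by
  apply card_nbij' σ σ.symm <;> simp [Set.MapsTo, Set.LeftInvOn, Set.RightInvOn]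

/-- All such coordinates lie above the smallest of them, whose rank is therefore at least their
number. -/
lemma card_upperRank_le (x : ι → α) (k : ℕ) : #{j | upperRank x j ≤ k} ≤ k := by
  obtain hs | hs := (univ.filter fun j => upperRank x j ≤ k).eq_empty_or_nonempty
  · simp [hs]
  obtain ⟨j, hj, hmin⟩ := exists_min_image _ x hs
  calc #{j | upperRank x j ≤ k} ≤ upperRank x j :=
        card_le_card fun i hi => mem_filter.mpr ⟨mem_univ i, hmin i hi⟩
    _ ≤ k := (mem_filter.mp hj).2

lemma upperRank_zero {B : ℕ} (x : Fin (B + 1) → α) :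
    upperRank x 0 = 1 + #{i : Fin B | x 0 ≤ x i.succ} := by
  rw [upperRank, Fin.univ_succ, filter_cons, if_pos le_rfl, card_cons, filter_map, card_map,
    add_comm]
  rfl

end UpperRank

lemma measurable_upperRank {ι : Type*} [Fintype ι] (j : ι) :
    Measurable fun x : ι → ℝ => upperRank x j := by
  simp only [upperRank, card_filter]
  exact Finset.measurable_sum _ fun i _ =>
    Measurable.ite (measurableSet_le (measurable_pi_apply j) (measurable_pi_apply i))
      measurable_const measurable_const

open Classical in
lemma sum_measure_le_of_forall_card_le {Ω ι : Type*} [MeasurableSpace Ω] [Fintype ι]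
    (μ : Measure Ω) {E : ι → Set Ω} (hE : ∀ i, MeasurableSet (E i)) {k : ℕ}
    (hk : ∀ ω, #{i | ω ∈ E i} ≤ k) :
    ∑ i, μ (E i) ≤ k * μ Set.univ := by
  have hpt : ∀ ω, ∑ i, (E i).indicator (1 : Ω → ℝ≥0∞) ω ≤ k := fun ω => by
    simp only [Set.indicator_apply, Pi.one_apply, sum_boole]
    exact_mod_cast hk ω
  calc ∑ i, μ (E i) = ∑ i, ∫⁻ ω, (E i).indicator 1 ω ∂μ := by
        simp only [lintegral_indicator_one (hE _)]
    _ = ∫⁻ ω, ∑ i, (E i).indicator 1 ω ∂μ :=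
        (lintegral_finsetSum _ fun i _ => measurable_const.indicator (hE i)).symm
    _ ≤ ∫⁻ _, (k : ℝ≥0∞) ∂μ := lintegral_mono hpt
    _ = k * μ Set.univ := lintegral_const _

def IsExchangeable {Ω ι α : Type*} [MeasurableSpace Ω] [MeasurableSpace α]
    (μ : Measure Ω) (X : Ω → ι → α) : Prop :=
  ∀ σ : Equiv.Perm ι, μ.map (fun ω => X ω ∘ σ) = μ.map X

namespace IsExchangeable

variable {Ω ι : Type*} [MeasurableSpace Ω] {μ : Measure Ω}

lemma measure_preimage_comp_perm {α : Type*} [MeasurableSpace α] {X : Ω → ι → α}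
    (hX : IsExchangeable μ X) (hXm : Measurable X)
    (σ : Equiv.Perm ι) {S : Set (ι → α)} (hS : MeasurableSet S) :
    μ ((fun ω => X ω ∘ σ) ⁻¹' S) = μ (X ⁻¹' S) := by
  have hXσ : Measurable fun ω => X ω ∘ σ :=
    measurable_pi_iff.mpr fun i => measurable_pi_iff.mp hXm (σ i)
  rw [← Measure.map_apply hXσ hS, hX σ, Measure.map_apply hXm hS]

variable {X : Ω → ι → ℝ}

lemma measure_upperRank_le_eq [Fintype ι] (hX : IsExchangeable μ X)
    (hXm : Measurable X) (k : ℕ) (i j : ι) :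
    μ {ω | upperRank (X ω) i ≤ k} = μ {ω | upperRank (X ω) j ≤ k} := by
  classical
  set S := {x : ι → ℝ | upperRank x i ≤ k}
  have hS : MeasurableSet S :=
    measurableSet_le (measurable_upperRank i) measurable_const
  calc μ {ω | upperRank (X ω) i ≤ k} = μ ((fun ω => X ω ∘ Equiv.swap i j) ⁻¹' S) :=
        (hX.measure_preimage_comp_perm hXm _ hS).symm
    _ = μ {ω | upperRank (X ω) j ≤ k} := by
        simp only [S, Set.preimage_ofPred_eq, upperRank_comp_perm, Equiv.swap_apply_left]

lemma card_mul_measure_upperRank_le [Fintype ι] [IsProbabilityMeasure μ]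
    (hX : IsExchangeable μ X) (hXm : Measurable X) (k : ℕ) (j : ι) :
    (Fintype.card ι : ℝ≥0∞) * μ {ω | upperRank (X ω) j ≤ k} ≤ k := by
  have hE : ∀ i, MeasurableSet {ω | upperRank (X ω) i ≤ k} := fun i =>
    measurableSet_le ((measurable_upperRank i).comp hXm) measurable_const
  calc Fintype.card ι * μ {ω | upperRank (X ω) j ≤ k}
      = ∑ i, μ {ω | upperRank (X ω) i ≤ k} := by
        rw [sum_congr rfl fun i _ => hX.measure_upperRank_le_eq hXm k i j, sum_const, card_univ,
          nsmul_eq_mul]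
    _ ≤ k * μ Set.univ := sum_measure_le_of_forall_card_le μ hE fun ω => by
        convert card_upperRank_le (X ω) k using 4; exact Iff.rfl
    _ = k := by simp

end IsExchangeable

lemma natCast_floor_le_ofReal (c : ℝ) : (⌊c⌋₊ : ℝ≥0∞) ≤ ENNReal.ofReal c := by
  rw [← ENNReal.ofReal_natCast, ENNReal.ofReal_le_ofReal_iff']
  rcases le_total 0 c with hc | hc
  · exact .inl (Nat.floor_le hc)
  · simp [Nat.floor_of_nonpos hc]

theorem stmt_12_general {Ω : Type*} [MeasureSpace Ω] [IsProbabilityMeasure (volume : Measure Ω)]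
    {B : ℕ} (T : Ω → ℝ) (Ts : Fin B → Ω → ℝ)
    (W : Fin (B + 1) → Ω → ℝ) (hW : W = Fin.cons T Ts)
    (hmeas : ∀ i, Measurable (W i))
    (hexch : ∀ σ : Equiv.Perm (Fin (B + 1)),
      Measure.map (fun ω (j : Fin (B + 1)) => W (σ j) ω) (volume : Measure Ω) =
      Measure.map (fun ω (j : Fin (B + 1)) => W j ω) (volume : Measure Ω))
    (α : ℝ) :
    (volume : Measure Ω) {ω |
        (1 + ((Finset.univ.filter fun i => T ω ≤ Ts i ω).card : ℝ)) / (B + 1) ≤ α}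
      ≤ ENNReal.ofReal α := by
  set X : Ω → Fin (B + 1) → ℝ := fun ω j => W j ω
  have hevent : {ω | (1 + ((Finset.univ.filter fun i => T ω ≤ Ts i ω).card : ℝ)) / (B + 1) ≤ α}
      = {ω | upperRank (X ω) 0 ≤ ⌊(B + 1) * α⌋₊} := by
    ext ω
    rw [Set.mem_ofPred_eq, Set.mem_ofPred_eq, Nat.le_floor_iff' (upperRank_pos _ _).ne',
      div_le_iff₀' (by positivity), upperRank_zero]
    simp [X, hW]
  have hX : IsExchangeable volume X := hexch
  have hbound := hX.card_mul_measure_upperRank_le (measurable_pi_lambda _ hmeas)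
    ⌊(B + 1) * α⌋₊ 0
  rw [Fintype.card_fin, ← hevent] at hbound
  have hB : ((B + 1 : ℕ) : ℝ≥0∞) ≠ 0 := by simp
  refine (ENNReal.mul_le_mul_iff_right hB (ENNReal.natCast_ne_top _)).mp ?_
  calc ((B + 1 : ℕ) : ℝ≥0∞) * _ ≤ ⌊(B + 1) * α⌋₊ := hbound
    _ ≤ ENNReal.ofReal ((B + 1) * α) := natCast_floor_le_ofReal _
    _ = (B + 1 : ℕ) * ENNReal.ofReal α := by
      rw [ENNReal.ofReal_mul (by positivity)]; norm_cast

theorem stmt_12 {Ω : Type*} [MeasureSpace Ω] [IsProbabilityMeasure (volume : Measure Ω)]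
    {B : ℕ} (T : Ω → ℝ) (Ts : Fin B → Ω → ℝ)
    (W : Fin (B + 1) → Ω → ℝ) (hW : W = Fin.cons T Ts)
    (hmeas : ∀ i, Measurable (W i))
    (hexch : ∀ σ : Equiv.Perm (Fin (B + 1)),
      Measure.map (fun ω (j : Fin (B + 1)) => W (σ j) ω) (volume : Measure Ω) =
      Measure.map (fun ω (j : Fin (B + 1)) => W j ω) (volume : Measure Ω))
    (α : ℝ) (hα0 : 0 < α) (hα1 : α < 1) :
    (volume : Measure Ω) {ω |
        (1 + ((Finset.univ.filter fun i => T ω ≤ Ts i ω).card : ℝ)) / (B + 1) ≤ α}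
      ≤ ENNReal.ofReal α :=
  stmt_12_general T Ts W hW hmeas hexch α
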